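/- (First-iterate estimate of Theorem 3.1 for the GBGS method.) Let x₀ ∈ R^n with Aᵀ(b − Ax₀) ≠ 0, let J₀ be the greedy index set determined by θ ∈ [0,1] and r₀ = b − Ax₀, and let x₁ = x₀ + I_{J₀} A_{J₀}† (b − Ax₀). Then ‖x₁ − x⋆‖²_{AᵀA} ≤ (1 − (‖A_{J₀}‖_F² / σ_max(A_{J₀})²) · σ_min(A)² / ‖A‖_F²) · ‖x₀ − x⋆‖²_{AᵀA}. -/

import Mathlib

noncomputable section
open Matrix

/-- Squared Euclidean norm `‖v‖₂²` of a vector. -/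
def norm2 {ι : Type*} [Fintype ι] (v : ι → ℝ) : ℝ := ∑ i, (v i) ^ 2

/-- Squared Frobenius norm `‖A‖_F²` of a matrix. -/
def frob2 {ι κ : Type*} [Fintype ι] [Fintype κ] (A : Matrix ι κ ℝ) : ℝ :=
  ∑ i, ∑ j, (A i j) ^ 2

theorem Matrix.isHermitian_transpose_mul_self {ι κ : Type*} [Fintype ι]
    (B : Matrix ι κ ℝ) : (Bᵀ * B).IsHermitian := by
  first
  | simpa using Matrix.isHermitian_conjTranspose_mul_self B
  | (unfold Matrix.IsHermitian; ext i j; simp [Matrix.mul_apply, mul_comm])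

/-- Squared largest singular value `σ_max(B)²`, i.e. the largest eigenvalue of `Bᵀ * B`. -/
def sigmaMaxSq {ι κ : Type*} [Fintype ι] [Fintype κ] [DecidableEq κ]
    (B : Matrix ι κ ℝ) : ℝ :=
  sSup (Set.range (Matrix.isHermitian_transpose_mul_self B).eigenvalues)

/-- Squared smallest singular value `σ_min(B)²`, i.e. the smallest eigenvalue of `Bᵀ * B`. -/
def sigmaMinSq {ι κ : Type*} [Fintype ι] [Fintype κ] [DecidableEq κ]
    (B : Matrix ι κ ℝ) : ℝ :=
  sInf (Set.range (Matrix.isHermitian_transpose_mul_self B).eigenvalues)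

/-- Squared Euclidean norm `‖A_(j)‖₂²` of the `j`-th column of `A`. -/
def col2 {m n : ℕ} (A : Matrix (Fin m) (Fin n) ℝ) (j : Fin n) : ℝ := ∑ i, (A i j) ^ 2

/-- `A` has full column rank: its columns are linearly independent. -/
def FullColRank {m n : ℕ} (A : Matrix (Fin m) (Fin n) ℝ) : Prop :=
  LinearIndependent ℝ fun j : Fin n => (fun i => A i j : Fin m → ℝ)

/-- `max_{1 ≤ j ≤ n} |A_(j)ᵀ r|² / ‖A_(j)‖₂²`. -/
def maxRatio {m n : ℕ} (A : Matrix (Fin m) (Fin n) ℝ) (r : Fin m → ℝ) : ℝ :=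
  ⨆ j : Fin n, ((Aᵀ *ᵥ r) j) ^ 2 / col2 A j

/-- The greedy parameter
`ε = (θ/‖Aᵀr‖₂²)·max_j |A_(j)ᵀ r|²/‖A_(j)‖₂² + (1−θ)/‖A‖_F²`. -/
def eps {m n : ℕ} (A : Matrix (Fin m) (Fin n) ℝ) (r : Fin m → ℝ) (θ : ℝ) : ℝ :=
  θ / norm2 (Aᵀ *ᵥ r) * maxRatio A r + (1 - θ) / frob2 A

open Classical in
/-- The greedy index set `J = { j : |A_(j)ᵀ r|² ≥ ε ‖Aᵀr‖₂² ‖A_(j)‖₂² }`. -/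
def greedySet {m n : ℕ} (A : Matrix (Fin m) (Fin n) ℝ) (r : Fin m → ℝ) (θ : ℝ) :
    Finset (Fin n) :=
  Finset.univ.filter fun j =>
    eps A r θ * norm2 (Aᵀ *ᵥ r) * col2 A j ≤ ((Aᵀ *ᵥ r) j) ^ 2

/-- The column submatrix `A_J` of `A`, with columns indexed by `J`. -/
def subCols {m n : ℕ} (A : Matrix (Fin m) (Fin n) ℝ) (J : Finset (Fin n)) :
    Matrix (Fin m) {j // j ∈ J} ℝ :=
  A.submatrix id fun j => (j : Fin n)

/-- The submatrix `I_J` of the `n × n` identity with columns indexed by `J`. -/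
def subId {n : ℕ} (J : Finset (Fin n)) : Matrix (Fin n) {j // j ∈ J} ℝ :=
  (1 : Matrix (Fin n) (Fin n) ℝ).submatrix id fun j => (j : Fin n)

/-- Moore–Penrose pseudoinverse of a full-column-rank matrix: `B† = (BᵀB)⁻¹Bᵀ`. -/
def pinv {ι κ : Type*} [Fintype ι] [Fintype κ] [DecidableEq κ] (B : Matrix ι κ ℝ) :
    Matrix κ ι ℝ :=
  (Bᵀ * B)⁻¹ * Bᵀ

/-- The matrix `Ã_J` whose columns are the normalized columns `A_(j)/‖A_(j)‖₂`, `j ∈ J`. -/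
def tildeA {m n : ℕ} (A : Matrix (Fin m) (Fin n) ℝ) (J : Finset (Fin n)) :
    Matrix (Fin m) {j // j ∈ J} ℝ :=
  Matrix.of fun i j => A i (j : Fin n) / Real.sqrt (col2 A (j : Fin n))

/-- The matrix `Ĩ_J` whose columns are `e_j/‖A_(j)‖₂`, `j ∈ J`. -/
def tildeI {m n : ℕ} (A : Matrix (Fin m) (Fin n) ℝ) (J : Finset (Fin n)) :
    Matrix (Fin n) {j // j ∈ J} ℝ :=
  Matrix.of fun i j => (if i = (j : Fin n) then 1 else 0) / Real.sqrt (col2 A (j : Fin n))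

/-!
Write `e = A(x₀ − x⋆)` and `J = J₀`. Since `Aᵀ(b − Ax⋆) = 0`, the step gives
`A(x₁ − x⋆) = e − A_J A_J† e`, so the energy error drops by
`q = (A_Jᵀe)ᵀ(A_JᵀA_J)⁻¹(A_Jᵀe) ≥ ‖A_Jᵀr₀‖² / σ_max(A_J)²`, as `A_Jᵀe = −A_Jᵀr₀`.
Each selected column has `|A_(j)ᵀr₀|² ≥ ε‖Aᵀr₀‖²‖A_(j)‖²`, and `ε‖Aᵀr₀‖² ≥ ‖Aᵀr₀‖²/‖A‖_F²`
because the largest ratio `|A_(j)ᵀr₀|²/‖A_(j)‖²` dominates their `‖A_(j)‖²`-weighted mean.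
Hence `‖A_Jᵀr₀‖² ≥ ‖A_J‖_F² ‖Aᵀr₀‖²/‖A‖_F²`, and `‖Aᵀr₀‖² = ‖AᵀA(x₀ − x⋆)‖² ≥ σ_min(A)²‖e‖²`.
-/

section norm2
variable {ι κ : Type*} [Fintype ι] [Fintype κ]

lemma norm2_eq_dotProduct (v : ι → ℝ) : norm2 v = v ⬝ᵥ v := by
  simp only [norm2, dotProduct, sq]

lemma norm2_neg (v : ι → ℝ) : norm2 (-v) = norm2 v := by
  simp only [norm2, Pi.neg_apply, neg_sq]

lemma norm2_pos {v : ι → ℝ} (hv : v ≠ 0) : 0 < norm2 v := by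
  obtain ⟨i, hi⟩ := Function.ne_iff.mp hv
  exact (sq_pos_of_ne_zero hi).trans_le
    (Finset.single_le_sum (fun j _ => sq_nonneg (v j)) (Finset.mem_univ i))

lemma norm2_mulVec (B : Matrix ι κ ℝ) (v : κ → ℝ) : norm2 (B *ᵥ v) = v ⬝ᵥ ((Bᵀ * B) *ᵥ v) := by
  rw [norm2_eq_dotProduct, ← mulVec_mulVec, dotProduct_mulVec v, vecMul_transpose]

lemma frob2_eq_sum_sum_sq (B : Matrix ι κ ℝ) : frob2 B = ∑ j, ∑ i, B i j ^ 2 :=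
  Finset.sum_comm

lemma frob2_nonneg (B : Matrix ι κ ℝ) : 0 ≤ frob2 B := by
  unfold frob2
  positivity

lemma norm2_sub_mulVec_pinv [DecidableEq κ] (B : Matrix ι κ ℝ) (hB : IsUnit (Bᵀ * B).det)
    (e : ι → ℝ) :
    norm2 (e - B *ᵥ (pinv B *ᵥ e)) = norm2 e - (Bᵀ *ᵥ e) ⬝ᵥ ((Bᵀ * B)⁻¹ *ᵥ (Bᵀ *ᵥ e)) := by
  set t := Bᵀ *ᵥ e
  set w := (Bᵀ * B)⁻¹ *ᵥ t
  have hw : pinv B *ᵥ e = w := by rw [pinv, ← mulVec_mulVec]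
  have hNw : (Bᵀ * B) *ᵥ w = t := by rw [mulVec_mulVec, mul_nonsing_inv _ hB, one_mulVec]
  have hcross : e ⬝ᵥ (B *ᵥ w) = t ⬝ᵥ w := by rw [dotProduct_mulVec, ← mulVec_transpose]
  have hBw : (B *ᵥ w) ⬝ᵥ (B *ᵥ w) = t ⬝ᵥ w := by
    rw [← norm2_eq_dotProduct, norm2_mulVec, hNw, dotProduct_comm]
  rw [hw, norm2_eq_dotProduct, norm2_eq_dotProduct, sub_dotProduct, dotProduct_sub,
    dotProduct_sub, dotProduct_comm (B *ᵥ w) e, hcross, hBw]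
  ring

end norm2

namespace Matrix
variable {ι : Type*} [Fintype ι] [DecidableEq ι] {M : Matrix ι ι ℝ}

def IsHermitian.eigenCoords (hM : M.IsHermitian) (v : ι → ℝ) : ι → ℝ :=
  (hM.eigenvectorUnitary : Matrix ι ι ℝ)ᵀ *ᵥ v

lemma IsHermitian.mulVec_eq_eigenvectorUnitary_mulVec (hM : M.IsHermitian) (v : ι → ℝ) :
    M *ᵥ v = (hM.eigenvectorUnitary : Matrix ι ι ℝ) *ᵥ
      (diagonal hM.eigenvalues *ᵥ hM.eigenCoords v) := by
  conv_lhs => rw [hM.spectral_theorem]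
  simp [star_eq_conjTranspose, eigenCoords, mulVec_mulVec, Matrix.mul_assoc]

lemma IsHermitian.dotProduct_mulVec_eq_sum (hM : M.IsHermitian) (v : ι → ℝ) :
    v ⬝ᵥ (M *ᵥ v) = ∑ i, hM.eigenvalues i * hM.eigenCoords v i ^ 2 := by
  rw [hM.mulVec_eq_eigenvectorUnitary_mulVec, dotProduct_mulVec, ← mulVec_transpose]
  simp only [dotProduct, mulVec_diagonal, eigenCoords]
  exact Finset.sum_congr rfl fun i _ => by ring

lemma IsHermitian.norm2_mulVec_eq_sum (hM : M.IsHermitian) (v : ι → ℝ) :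
    norm2 (M *ᵥ v) = ∑ i, (hM.eigenvalues i * hM.eigenCoords v i) ^ 2 := by
  have hU : (hM.eigenvectorUnitary : Matrix ι ι ℝ)ᵀ * hM.eigenvectorUnitary = 1 := by
    simpa [star_eq_conjTranspose] using Unitary.coe_star_mul_self hM.eigenvectorUnitary
  rw [hM.mulVec_eq_eigenvectorUnitary_mulVec, norm2_mulVec, hU, one_mulVec,
    ← norm2_eq_dotProduct]
  simp only [norm2, mulVec_diagonal]

lemma PosSemidef.norm2_mulVec_le (hM : M.PosSemidef) (v : ι → ℝ) :
    norm2 (M *ᵥ v) ≤ sSup (Set.range hM.isHermitian.eigenvalues) * (v ⬝ᵥ (M *ᵥ v)) := by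
  rw [hM.isHermitian.norm2_mulVec_eq_sum, hM.isHermitian.dotProduct_mulVec_eq_sum,
    Finset.mul_sum]
  refine Finset.sum_le_sum fun i _ => ?_
  have hle := le_csSup (Set.finite_range hM.isHermitian.eigenvalues).bddAbove ⟨i, rfl⟩
  have hnonneg := hM.eigenvalues_nonneg i
  calc _ = hM.isHermitian.eigenvalues i *
        (hM.isHermitian.eigenvalues i * hM.isHermitian.eigenCoords v i ^ 2) := by ring
    _ ≤ _ := by gcongr

lemma PosSemidef.le_norm2_mulVec (hM : M.PosSemidef) (v : ι → ℝ) :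
    sInf (Set.range hM.isHermitian.eigenvalues) * (v ⬝ᵥ (M *ᵥ v)) ≤ norm2 (M *ᵥ v) := by
  rw [hM.isHermitian.norm2_mulVec_eq_sum, hM.isHermitian.dotProduct_mulVec_eq_sum,
    Finset.mul_sum]
  refine Finset.sum_le_sum fun i _ => ?_
  have hle := csInf_le (Set.finite_range hM.isHermitian.eigenvalues).bddBelow ⟨i, rfl⟩
  have hnonneg := hM.eigenvalues_nonneg i
  calc _ ≤ hM.isHermitian.eigenvalues i *
        (hM.isHermitian.eigenvalues i * hM.isHermitian.eigenCoords v i ^ 2) := by gcongr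
    _ = _ := by ring

lemma PosDef.norm2_le_mul_dotProduct_inv_mulVec (hM : M.PosDef) (t : ι → ℝ) :
    norm2 t ≤ sSup (Set.range hM.isHermitian.eigenvalues) * (t ⬝ᵥ (M⁻¹ *ᵥ t)) := by
  have hMw : M *ᵥ (M⁻¹ *ᵥ t) = t := by
    rw [mulVec_mulVec, mul_nonsing_inv _ hM.det_pos.ne'.isUnit, one_mulVec]
  have := hM.posSemidef.norm2_mulVec_le (M⁻¹ *ᵥ t)
  rwa [hMw, dotProduct_comm] at this

end Matrix

section singular
variable {ι κ : Type*} [Fintype ι] [Fintype κ] [DecidableEq κ] (B : Matrix ι κ ℝ)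

lemma sigmaMaxSq_nonneg : 0 ≤ sigmaMaxSq B :=
  Real.sSup_nonneg <| by
    rintro _ ⟨i, rfl⟩
    exact (posSemidef_conjTranspose_mul_self B).eigenvalues_nonneg i

lemma norm2_transpose_mulVec_div_sigmaMaxSq_le (hB : (Bᵀ * B).PosDef) (e : ι → ℝ) :
    norm2 (Bᵀ *ᵥ e) / sigmaMaxSq B ≤ (Bᵀ *ᵥ e) ⬝ᵥ ((Bᵀ * B)⁻¹ *ᵥ (Bᵀ *ᵥ e)) := by
  refine div_le_of_le_mul₀ (sigmaMaxSq_nonneg B) ?_ ?_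
  · simpa only [star_trivial] using hB.inv.posSemidef.dotProduct_mulVec_nonneg (Bᵀ *ᵥ e)
  · rw [mul_comm]
    exact hB.norm2_le_mul_dotProduct_inv_mulVec (Bᵀ *ᵥ e)

lemma sigmaMinSq_mul_norm2_mulVec_le (u : κ → ℝ) :
    sigmaMinSq B * norm2 (B *ᵥ u) ≤ norm2 ((Bᵀ * B) *ᵥ u) := by
  rw [norm2_mulVec B]
  exact (posSemidef_conjTranspose_mul_self B).le_norm2_mulVec u

end singular

section greedy
variable {m n : ℕ} {A : Matrix (Fin m) (Fin n) ℝ}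

lemma col2_pos (hA : FullColRank A) (j : Fin n) : 0 < col2 A j :=
  norm2_pos (hA.ne_zero j)

lemma sq_le_maxRatio_mul_col2 (hcol : ∀ j, 0 < col2 A j) (r : Fin m → ℝ) (j : Fin n) :
    (Aᵀ *ᵥ r) j ^ 2 ≤ maxRatio A r * col2 A j := by
  have hj : (Aᵀ *ᵥ r) j ^ 2 / col2 A j ≤ maxRatio A r :=
    le_ciSup (f := fun j => (Aᵀ *ᵥ r) j ^ 2 / col2 A j) (Set.finite_range _).bddAbove j
  rwa [div_le_iff₀ (hcol j)] at hj

lemma norm2_le_maxRatio_mul_frob2 (hcol : ∀ j, 0 < col2 A j) (r : Fin m → ℝ) :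
    norm2 (Aᵀ *ᵥ r) ≤ maxRatio A r * frob2 A := by
  rw [frob2_eq_sum_sum_sq, Finset.mul_sum]
  exact Finset.sum_le_sum fun j _ => sq_le_maxRatio_mul_col2 hcol r j

lemma norm2_div_frob2_le_eps_mul (hcol : ∀ j, 0 < col2 A j) {r : Fin m → ℝ}
    (hr : Aᵀ *ᵥ r ≠ 0) {θ : ℝ} (hθ : 0 ≤ θ) :
    norm2 (Aᵀ *ᵥ r) / frob2 A ≤ eps A r θ * norm2 (Aᵀ *ᵥ r) := by
  obtain ⟨j, -⟩ := Function.ne_iff.mp hr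
  have hF : 0 < frob2 A := by
    rw [frob2_eq_sum_sum_sq]
    exact Finset.sum_pos (fun j _ => hcol j) ⟨j, Finset.mem_univ j⟩
  have hmean : norm2 (Aᵀ *ᵥ r) / frob2 A ≤ maxRatio A r :=
    (div_le_iff₀ hF).2 (norm2_le_maxRatio_mul_frob2 hcol r)
  have heps : eps A r θ * norm2 (Aᵀ *ᵥ r) =
      θ * maxRatio A r + (1 - θ) * (norm2 (Aᵀ *ᵥ r) / frob2 A) := by
    have := (norm2_pos hr).ne'
    unfold eps
    field_simp
  rw [heps]
  nlinarith [mul_le_mul_of_nonneg_left hmean hθ]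

lemma frob2_subCols_greedySet_mul_le (A : Matrix (Fin m) (Fin n) ℝ) (r : Fin m → ℝ) (θ : ℝ) :
    frob2 (subCols A (greedySet A r θ)) * (eps A r θ * norm2 (Aᵀ *ᵥ r)) ≤
      norm2 ((subCols A (greedySet A r θ))ᵀ *ᵥ r) := by
  rw [frob2_eq_sum_sum_sq, Finset.sum_mul]
  refine Finset.sum_le_sum fun j _ => ?_
  calc _ = eps A r θ * norm2 (Aᵀ *ᵥ r) * col2 A j := mul_comm _ _
    _ ≤ (Aᵀ *ᵥ r) j ^ 2 := (Finset.mem_filter.mp j.2).2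

lemma frob2_subCols_greedySet_mul_div_le (hA : FullColRank A) {r : Fin m → ℝ}
    (hr : Aᵀ *ᵥ r ≠ 0) {θ : ℝ} (hθ : 0 ≤ θ) :
    frob2 (subCols A (greedySet A r θ)) * (norm2 (Aᵀ *ᵥ r) / frob2 A) ≤
      norm2 ((subCols A (greedySet A r θ))ᵀ *ᵥ r) :=
  (mul_le_mul_of_nonneg_left (norm2_div_frob2_le_eps_mul (col2_pos hA) hr hθ)
    (frob2_nonneg _)).trans (frob2_subCols_greedySet_mul_le A r θ)

end greedy

section step
variable {m n : ℕ} (A : Matrix (Fin m) (Fin n) ℝ) (J : Finset (Fin n))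

lemma mul_subId : A * subId J = subCols A J := by
  ext i j
  simp [subId, subCols, Matrix.mul_apply, Matrix.one_apply]

lemma subCols_transpose_mulVec_apply (v : Fin m → ℝ) (j : {j // j ∈ J}) :
    ((subCols A J)ᵀ *ᵥ v) j = (Aᵀ *ᵥ v) j :=
  rfl

variable {A} in
lemma posDef_transpose_mul_subCols (hA : FullColRank A) :
    ((subCols A J)ᵀ * subCols A J).PosDef := by
  have hinj : Function.Injective (subCols A J).mulVec :=
    mulVec_injective_iff.2 (hA.comp _ Subtype.coe_injective)
  simpa [conjTranspose_eq_transpose_of_trivial] using PosDef.conjTranspose_mul_self _ hinj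

variable {A} in
lemma transpose_mulVec_sub_mulVec {b : Fin m → ℝ} {xstar : Fin n → ℝ}
    (hstar : (Aᵀ * A) *ᵥ xstar = Aᵀ *ᵥ b) (x0 : Fin n → ℝ) :
    Aᵀ *ᵥ (b - A *ᵥ x0) = -((Aᵀ * A) *ᵥ (x0 - xstar)) := by
  rw [mulVec_sub, mulVec_sub, ← hstar, mulVec_mulVec, neg_sub]

variable {A} in
lemma mulVec_step_sub {b : Fin m → ℝ} {xstar : Fin n → ℝ}
    (hstar : (Aᵀ * A) *ᵥ xstar = Aᵀ *ᵥ b) (x0 : Fin n → ℝ) :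
    A *ᵥ (x0 + subId J *ᵥ (pinv (subCols A J) *ᵥ (b - A *ᵥ x0)) - xstar) =
      A *ᵥ (x0 - xstar) - subCols A J *ᵥ (pinv (subCols A J) *ᵥ (A *ᵥ (x0 - xstar))) := by
  have hres : (subCols A J)ᵀ *ᵥ (b - A *ᵥ xstar) = 0 := by
    ext j
    rw [subCols_transpose_mulVec_apply, mulVec_sub, mulVec_mulVec, hstar, sub_self]
    rfl
  have hpinv : pinv (subCols A J) *ᵥ (b - A *ᵥ x0) =
      -(pinv (subCols A J) *ᵥ (A *ᵥ (x0 - xstar))) := by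
    have hsplit : b - A *ᵥ x0 = (b - A *ᵥ xstar) - A *ᵥ (x0 - xstar) := by
      rw [mulVec_sub]; abel
    rw [hsplit, pinv, ← mulVec_mulVec, ← mulVec_mulVec, mulVec_sub, hres, zero_sub, mulVec_neg]
  rw [add_sub_right_comm, mulVec_add, mulVec_mulVec, mul_subId, hpinv, mulVec_neg,
    ← sub_eq_add_neg]

end step

/-- first-iterate estimate (4) of Theorem 3.1, GBGS method:
`‖x₁ − x⋆‖²_{AᵀA} ≤ (1 − (‖A_{J₀}‖_F²/σ_max(A_{J₀})²) σ_min(A)²/‖A‖_F²) ‖x₀ − x⋆‖²_{AᵀA}`. -/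
theorem stmt7 {m n : ℕ} (A : Matrix (Fin m) (Fin n) ℝ) (hA : FullColRank A)
    (b : Fin m → ℝ) (xstar : Fin n → ℝ) (hstar : (Aᵀ * A) *ᵥ xstar = Aᵀ *ᵥ b)
    (θ : ℝ) (hθ : θ ∈ Set.Icc (0 : ℝ) 1) (x0 : Fin n → ℝ)
    (r0 : Fin m → ℝ) (hr : r0 = b - A *ᵥ x0) (hr0 : Aᵀ *ᵥ r0 ≠ 0)
    (J0 : Finset (Fin n)) (hJ0 : J0 = greedySet A r0 θ) (x1 : Fin n → ℝ)
    (hx1 : x1 = x0 + subId J0 *ᵥ (pinv (subCols A J0) *ᵥ (b - A *ᵥ x0))) :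
    norm2 (A *ᵥ (x1 - xstar)) ≤
      (1 - frob2 (subCols A J0) / sigmaMaxSq (subCols A J0) *
          (sigmaMinSq A / frob2 A)) *
        norm2 (A *ᵥ (x0 - xstar)) := by
  subst hJ0 hx1
  set B := subCols A (greedySet A r0 θ)
  set e := A *ᵥ (x0 - xstar)
  have hN : (Bᵀ * B).PosDef := posDef_transpose_mul_subCols _ hA
  have hgrad : Aᵀ *ᵥ r0 = -((Aᵀ * A) *ᵥ (x0 - xstar)) :=
    hr ▸ transpose_mulVec_sub_mulVec hstar x0
  have hBe : Bᵀ *ᵥ e = -(Bᵀ *ᵥ r0) := by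
    ext j
    rw [Pi.neg_apply, subCols_transpose_mulVec_apply, subCols_transpose_mulVec_apply, hgrad,
      Pi.neg_apply, neg_neg, mulVec_mulVec]
  have hmin : sigmaMinSq A * norm2 e ≤ norm2 (Aᵀ *ᵥ r0) := by
    rw [hgrad, norm2_neg]
    exact sigmaMinSq_mul_norm2_mulVec_le A _
  rw [mulVec_step_sub _ hstar, norm2_sub_mulVec_pinv B hN.det_pos.ne'.isUnit]
  suffices frob2 B / sigmaMaxSq B * (sigmaMinSq A / frob2 A) * norm2 e ≤
      (Bᵀ *ᵥ e) ⬝ᵥ ((Bᵀ * B)⁻¹ *ᵥ (Bᵀ *ᵥ e)) by linarith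
  have hFA := frob2_nonneg A
  have hFB := frob2_nonneg B
  have hσ := sigmaMaxSq_nonneg B
  calc _ = frob2 B * (sigmaMinSq A * norm2 e / frob2 A) / sigmaMaxSq B := by ring
    _ ≤ frob2 B * (norm2 (Aᵀ *ᵥ r0) / frob2 A) / sigmaMaxSq B := by gcongr
    _ ≤ norm2 (Bᵀ *ᵥ r0) / sigmaMaxSq B := by
      gcongr
      exact frob2_subCols_greedySet_mul_div_le hA hr0 hθ.1
    _ = norm2 (Bᵀ *ᵥ e) / sigmaMaxSq B := by rw [hBe, norm2_neg]
    _ ≤ _ := norm2_transpose_mulVec_div_sigmaMaxSq_le B hN e
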